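/- arXiv:math/0605723 — 3 statements merged into one kernel-verified Lean document; each statement's English description precedes it below -/
import Mathlib

section
/- Let Γ be a countable discrete group and f ∈ ℤΓ such that the action α_f on X_f is expansive. Then for every L > 0 and ε > 0 there exists a finite subset F(L,ε) ⊆ Γ with the following property: if w ∈ ℓ∞(Γ) satisfies ρ_f w ∈ ℓ∞(Γ,ℤ), ‖w‖_∞ ≤ L, and (ρ_f w)_γ = 0 for every γ ∈ F(L,ε), then |w_1| < ε (where w_1 is the value of w at the identity of Γ). -/
open scoped BigOperators symmDiff Pointwise

noncomputable section

/-- The additive circle `𝕋 = ℝ/ℤ`. -/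
abbrev Torus : Type := AddCircle (1 : ℝ)

section GroupDefs

variable {Γ : Type*} [Group Γ]

/-- For `f ∈ ℤΓ`, the map `ρ_f : 𝕋^Γ → 𝕋^Γ`, `(ρ_f x)_{γ'} = Σ_γ f_γ • x_{γ'γ}`. -/
def rhoT (f : Γ →₀ ℤ) (x : Γ → Torus) : Γ → Torus :=
  fun γ' => f.sum fun γ c => c • x (γ' * γ)

/-- The compact abelian group `X_f = ker ρ_f ⊆ 𝕋^Γ` (as a subset). -/
def XSet (f : Γ →₀ ℤ) : Set (Γ → Torus) := {x | rhoT f x = 0}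

/-- The left shift `(λ^γ x)_{γ'} = x_{γ⁻¹ γ'}` on `𝕋^Γ`; restricted to `X_f` this is `α_f^γ`. -/
def lsh (γ : Γ) (x : Γ → Torus) : Γ → Torus := fun γ' => x (γ⁻¹ * γ')

/-- The left shift `(λ^γ w)_{γ'} = w_{γ⁻¹ γ'}` on real-valued functions. -/
def lshR (γ : Γ) (w : Γ → ℝ) : Γ → ℝ := fun γ' => w (γ⁻¹ * γ')

/-- Expansiveness of the `Γ`-action `α_f` on `X_f`: there is an open neighbourhood `U`
of `0` such that the only point of `X_f` all of whose translates stay in `U` is `0`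
(equivalently, `⋂_γ α_f^γ (U ∩ X_f) = {0}`). -/
def ExpansiveAction (f : Γ →₀ ℤ) : Prop :=
  ∃ U : Set (Γ → Torus), IsOpen U ∧ {x | x ∈ XSet f ∧ ∀ γ : Γ, lsh γ x ∈ U} = {0}

/-- `w ∈ ℓ∞(Γ)`: boundedness of a real-valued function. -/
def Bdd (w : Γ → ℝ) : Prop := ∃ C : ℝ, ∀ γ : Γ, |w γ| ≤ C

/-- `w ∈ ℓ∞(Γ,ℤ)`: all values are integers. -/
def IntValued (w : Γ → ℝ) : Prop := ∀ γ : Γ, ∃ k : ℤ, w γ = (k : ℝ)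

/-- For `f ∈ ℤΓ`, the operator `ρ_f` on `ℓ∞(Γ)`: `(ρ_f w)_γ = Σ_{γ'} w_{γγ'} f_{γ'}`. -/
def rhoInf (f : Γ →₀ ℤ) (w : Γ → ℝ) : Γ → ℝ :=
  fun γ => f.sum fun γ' c => (c : ℝ) * w (γ * γ')

/-- For `h ∈ ℓ¹(Γ)`, the operator `ρ_h` on `ℓ∞(Γ)`: `(ρ_h w)_γ = Σ_{γ'} w_{γγ'} h_{γ'}`. -/
def rhoL1 (h : Γ → ℝ) (w : Γ → ℝ) : Γ → ℝ :=
  fun γ => ∑' γ' : Γ, w (γ * γ') * h γ'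

/-- Convolution on `ℓ¹(Γ)`: `(g·h)_γ = Σ_{γ'} g_{γ'} h_{γ'⁻¹γ}`. -/
def conv (g h : Γ → ℝ) : Γ → ℝ := fun γ => ∑' γ' : Γ, g γ' * h (γ'⁻¹ * γ)

/-- Convolution on `ℓ¹(Γ,ℂ)`. -/
def convC (g h : Γ → ℂ) : Γ → ℂ := fun γ => ∑' γ' : Γ, g γ' * h (γ'⁻¹ * γ)

open Classical in
/-- The unit `δ₁` of the convolution algebra `ℓ¹(Γ)`. -/
def deltaOne : Γ → ℝ := fun γ => if γ = 1 then 1 else 0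

open Classical in
/-- The unit `δ₁` of `ℓ¹(Γ,ℂ)`. -/
def deltaOneC : Γ → ℂ := fun γ => if γ = 1 then 1 else 0

/-- `g` is a two-sided convolution inverse of `f` in `ℓ¹(Γ)`. -/
def IsL1Inverse (f g : Γ → ℝ) : Prop :=
  Summable g ∧ conv f g = deltaOne ∧ conv g f = deltaOne

/-- View `f ∈ ℤΓ` as an element of `ℓ¹(Γ)`. -/
def fR (f : Γ →₀ ℤ) : Γ → ℝ := fun γ => (f γ : ℝ)

/-- View `f ∈ ℤΓ` as an element of `ℓ¹(Γ,ℂ)`. -/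
def fCC (f : Γ →₀ ℤ) : Γ → ℂ := fun γ => (f γ : ℂ)

/-- The `ℓ¹`-norm `‖f‖₁` of `f ∈ ℤΓ`. -/
def finsuppL1 (f : Γ →₀ ℤ) : ℝ := f.sum fun _ c => |(c : ℝ)|

/-- The `ℓ¹`-norm of `h ∈ ℓ¹(Γ,ℂ)`. -/
def l1normC (h : Γ → ℂ) : ℝ := ∑' γ : Γ, ‖h γ‖

/-- Coordinatewise reduction mod 1, `η : ℓ∞(Γ) → 𝕋^Γ`. -/
def etaT (w : Γ → ℝ) : Γ → Torus := fun γ => ((w γ : ℝ) : Torus)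

/-- The map `ξ = η ∘ ρ_{w}` for `w ∈ ℓ¹(Γ)`. -/
def xiMap (w : Γ → ℝ) (v : Γ → ℝ) : Γ → Torus := etaT (rhoL1 w v)

/-- A point `x ∈ 𝕋^Γ` is homoclinic if `λ^γ x → 0` along the cofinite filter on `Γ`. -/
def IsHomoclinic (x : Γ → Torus) : Prop :=
  Filter.Tendsto (fun γ : Γ => lsh γ x) Filter.cofinite (nhds 0)

/-- The set of `Γ'`-fixed points of `α_f` in `X_f`. -/
def FixSet (f : Γ →₀ ℤ) (Γ' : Subgroup Γ) : Set (Γ → Torus) :=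
  {x | x ∈ XSet f ∧ ∀ γ ∈ Γ', lsh γ x = x}

/-- Left `(K,ε)`-invariance of a finite set `Q ⊆ Γ`. -/
def LeftInv [DecidableEq Γ] (K : Finset Γ) (ε : ℝ) (Q : Finset Γ) : Prop :=
  ∑ γ ∈ K, (((Q.image fun q => γ * q) ∆ Q).card : ℝ) / (Q.card : ℝ) < ε

/-- Right `(K,ε)`-invariance of a finite set `Q ⊆ Γ`. -/
def RightInv [DecidableEq Γ] (K : Finset Γ) (ε : ℝ) (Q : Finset Γ) : Prop :=
  ∑ γ ∈ K, (((Q.image fun q => q * γ) ∆ Q).card : ℝ) / (Q.card : ℝ) < ε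

/-- Amenability: existence of a left Følner sequence. -/
def Amenable (Γ : Type*) [Group Γ] [DecidableEq Γ] : Prop :=
  ∃ Q : ℕ → Finset Γ, (∀ n, (Q n).Nonempty) ∧
    ∀ (K : Finset Γ) (ε : ℝ), 0 < ε → ∃ N : ℕ, ∀ n ≥ N, LeftInv K ε (Q n)

/-- Residual finiteness: there is a sequence of finite-index normal subgroups with
trivial intersection. -/
def ResFinite (Γ : Type*) [Group Γ] : Prop :=
  ∃ N : ℕ → Subgroup Γ, (∀ n, (N n).Normal ∧ (N n).FiniteIndex) ∧
    ∀ γ : Γ, (∀ n, γ ∈ N n) → γ = 1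

/-- `Q` is a fundamental domain for the coset space `Γ/Γ'`:
`{γQ : γ ∈ Γ'}` is a partition of `Γ`. -/
def IsFundDomain (Γ' : Subgroup Γ) (Q : Finset Γ) : Prop :=
  ∀ x : Γ, ∃! p : Γ × Γ, p.1 ∈ Γ' ∧ p.2 ∈ Q ∧ p.1 * p.2 = x

/-- `lim_n Γ_n = {1}`: for every finite `K ⊆ Γ` eventually `Γ_n ∩ K⁻¹K = {1}`. -/
def LimTriv (N : ℕ → Subgroup Γ) : Prop :=
  ∀ K : Finset Γ, ∃ M : ℕ, ∀ n ≥ M, ∀ γ ∈ N n, (∃ a ∈ K, ∃ b ∈ K, γ = a⁻¹ * b) → γ = 1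

/-- The word ball `B_F(n)` of radius `n` with respect to a generating set `F`. -/
def BallF (F : Finset Γ) (n : ℕ) : Set Γ :=
  {γ | ∃ l : List Γ, l.length ≤ n ∧ (∀ a ∈ l, a ∈ F) ∧ l.prod = γ}

end GroupDefs

/-- The Hilbert space `ℓ²(Γ,ℂ)`. -/
abbrev H2 (Γ : Type*) : Type _ := lp (fun _ : Γ => ℂ) 2

section Hilbert

variable {Γ : Type*} [Group Γ]

open Classical in
/-- The standard basis vector `δ₁ ∈ ℓ²(Γ,ℂ)`. -/
def deltaL2 : H2 Γ := lp.single 2 (1 : Γ) (1 : ℂ)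

/-- `A` is the right-convolution operator `ρ_f` on `ℓ²(Γ,ℂ)`,
`(ρ_f w)_γ = Σ_{γ'} w_{γγ'} f_{γ'}`. -/
def IsRho (f : Γ → ℂ) (A : H2 Γ →L[ℂ] H2 Γ) : Prop :=
  ∀ (w : H2 Γ) (γ : Γ), (A w : Γ → ℂ) γ = ∑' γ' : Γ, (w : Γ → ℂ) (γ * γ') * f γ'

instance instCFCH2 : ContinuousFunctionalCalculus ℝ (H2 Γ →L[ℂ] H2 Γ) IsSelfAdjoint :=
  IsSelfAdjoint.instContinuousFunctionalCalculus

/-- The von Neumann trace of `log (A A*)`, i.e. `tr_{NΓ}(log (A A*)) = (log(AA*) δ₁)(1)`,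
where `log` is given by the continuous functional calculus. -/
def trLogAAstar (A : H2 Γ →L[ℂ] H2 Γ) : ℝ :=
  (((cfc Real.log (A * star A)) deltaL2 : Γ → ℂ) (1 : Γ)).re

/-- The Fuglede–Kadison determinant `det_{NΓ} A = exp(½ tr(log (A A*)))`. -/
def detFK (A : H2 Γ →L[ℂ] H2 Γ) : ℝ := Real.exp (2⁻¹ * trLogAAstar A)

open Classical in
/-- `f^{(n)} : Γ/Γ_n → ℂ`, integration along the fibres: `f^{(n)}(δ) = Σ_{γ ∈ δ} f_γ`. -/
def fQuot (f : Γ → ℂ) (H : Subgroup Γ) : (Γ ⧸ H) → ℂ :=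
  fun δ => ∑' γ : Γ, if (QuotientGroup.mk γ : Γ ⧸ H) = δ then f γ else 0

open Classical in
/-- The indicator of the identity coset in `ℓ²(Γ/Γ_n, ℂ)`. -/
def deltaQuot (H : Subgroup Γ) : (Γ ⧸ H) → ℂ :=
  fun δ => if δ = (QuotientGroup.mk (1 : Γ) : Γ ⧸ H) then 1 else 0

end Hilbert

/-!
If `ρ_f w = 0` for a bounded `w`, then reducing a small multiple `t w` mod 1 gives a point of
`X_f` whose whole orbit stays in any prescribed neighbourhood of `0`; by expansiveness it is `0`,
and since `|t w| ≤ 1/2` this forces `w = 0`. So no `w` with `‖w‖_∞ ≤ L` and `|w_1| ≥ ε` lies in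
the kernel of `ρ_f`, and as this set of `w` is compact in the product topology while each
coordinate of `ρ_f` is continuous, finitely many coordinates already fail to vanish on it.
-/

lemma exists_pos_pi_closedBall_subset {ι α : Type*} [PseudoMetricSpace α] {x : ι → α}
    {U : Set (ι → α)} (hU : U ∈ nhds x) :
    ∃ δ > 0, Set.univ.pi (fun i => Metric.closedBall (x i) δ) ⊆ U := by
  rw [nhds_pi, Filter.mem_pi'] at hU
  obtain ⟨I, t, ht, hIU⟩ := hU
  have hsmall : ∀ᶠ δ in nhds (0 : ℝ), ∀ i ∈ I, Metric.closedBall (x i) δ ⊆ t i :=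
    (Filter.eventually_all_finset I).mpr fun i _ => eventually_closedBall_subset (ht i)
  obtain ⟨δ, hδ, hδpos⟩ :=
    ((hsmall.filter_mono nhdsWithin_le_nhds).and (self_mem_nhdsWithin (s := Set.Ioi 0))).exists
  exact ⟨δ, hδpos, fun y hy => hIU fun i hi => hδ i hi (hy i trivial)⟩

lemma isCompact_setOf_forall_abs_le (ι : Type*) (L : ℝ) :
    IsCompact {w : ι → ℝ | ∀ i, |w i| ≤ L} := by
  simpa [Set.pi, Real.norm_eq_abs] using
    isCompact_univ_pi fun _ : ι => isCompact_closedBall (0 : ℝ) L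

lemma Bdd.exists_pos_abs_mul_le {ι : Type*} {w : ι → ℝ} (hw : Bdd w) {r : ℝ} (hr : 0 < r) :
    ∃ t > 0, ∀ i, |t * w i| ≤ r := by
  obtain ⟨C, hC⟩ := hw
  have hC1 : 0 < |C| + 1 := by positivity
  refine ⟨r / (|C| + 1), by positivity, fun i => ?_⟩
  have hwC : |w i| ≤ |C| + 1 := by linarith [hC i, le_abs_self C]
  calc |r / (|C| + 1) * w i| = r / (|C| + 1) * |w i| := by
        rw [abs_mul, abs_of_pos (by positivity)]
    _ ≤ r / (|C| + 1) * (|C| + 1) := by gcongr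
    _ = r := div_mul_cancel₀ r hC1.ne'

section

variable {Γ : Type*} [Group Γ]

lemma rhoT_etaT (f : Γ →₀ ℤ) (w : Γ → ℝ) : rhoT f (etaT w) = etaT (rhoInf f w) := by
  funext γ
  have hmk : ∀ r : ℝ, (r : Torus) = QuotientAddGroup.mk' (AddSubgroup.zmultiples 1) r :=
    fun _ => rfl
  simp only [rhoT, etaT, rhoInf, Finsupp.sum, hmk, ← map_zsmul, ← map_sum, zsmul_eq_mul]

lemma rhoInf_smul (f : Γ →₀ ℤ) (c : ℝ) (w : Γ → ℝ) :
    rhoInf f (c • w) = c • rhoInf f w := by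
  funext γ
  simp only [rhoInf, Finsupp.sum, Pi.smul_apply, smul_eq_mul, Finset.mul_sum]
  exact Finset.sum_congr rfl fun _ _ => by ring

lemma continuous_rhoInf_apply (f : Γ →₀ ℤ) (γ : Γ) :
    Continuous fun w : Γ → ℝ => rhoInf f w γ := by
  simp only [rhoInf, Finsupp.sum]
  fun_prop

lemma eq_zero_of_rhoInf_eq_zero {f : Γ →₀ ℤ} (hexp : ExpansiveAction f) {w : Γ → ℝ}
    (hw : Bdd w) (hρ : rhoInf f w = 0) : w = 0 := by
  obtain ⟨U, hUo, hU⟩ := hexp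
  have h0U : (0 : Γ → Torus) ∈ U := by
    have h0 : (0 : Γ → Torus) ∈ {x | x ∈ XSet f ∧ ∀ γ, lsh γ x ∈ U} := hU ▸ rfl
    exact h0.2 1
  obtain ⟨δ, hδ, hδU⟩ := exists_pos_pi_closedBall_subset (hUo.mem_nhds h0U)
  obtain ⟨t, ht, htw⟩ := hw.exists_pos_abs_mul_le (lt_min hδ one_half_pos)
  set x := etaT (t • w)
  -- reduction mod 1 is isometric on `[-1/2, 1/2]`
  have hnorm : ∀ γ, ‖x γ‖ = |t * w γ| := fun γ =>
    (AddCircle.norm_coe_eq_abs_iff 1 one_ne_zero).mpr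
      (by simpa using (htw γ).trans (min_le_right _ _))
  have hX : x ∈ XSet f := by
    change rhoT f _ = 0
    rw [rhoT_etaT, rhoInf_smul, hρ, smul_zero]
    rfl
  have hshift : ∀ γ, lsh γ x ∈ U := fun γ => hδU fun γ' _ => by
    rw [Metric.mem_closedBall, Pi.zero_apply, dist_zero_right]
    exact (hnorm _).trans_le ((htw _).trans (min_le_left _ _))
  have hx : x = 0 := (hU ▸ ⟨hX, hshift⟩ : x ∈ ({0} : Set (Γ → Torus)))
  funext γ
  simpa [hx, ht.ne'] using hnorm γ

end

theorem statement7_general {Γ : Type*} [Group Γ]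
    (f : Γ →₀ ℤ) (hexp : ExpansiveAction f) :
    ∀ L : ℝ, 0 < L → ∀ ε : ℝ, 0 < ε → ∃ F : Finset Γ, ∀ w : Γ → ℝ,
      IntValued (rhoInf f w) → (∀ γ : Γ, |w γ| ≤ L) →
      (∀ γ ∈ F, rhoInf f w γ = 0) → |w 1| < ε := by
  intro L _ ε hε
  set S := {w : Γ → ℝ | (∀ γ, |w γ| ≤ L) ∧ ε ≤ |w 1|}
  have hS : IsCompact S := (isCompact_setOf_forall_abs_le Γ L).inter_right
    (isClosed_le continuous_const (continuous_apply 1).abs)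
  have hempty : S ∩ ⋂ γ, {w | rhoInf f w γ = 0} = ∅ := by
    refine Set.eq_empty_of_forall_notMem fun w ⟨⟨hwL, hw1⟩, hρ⟩ => ?_
    have hw : w = 0 :=
      eq_zero_of_rhoInf_eq_zero hexp ⟨L, hwL⟩ (funext fun γ => Set.mem_iInter.mp hρ γ)
    simp [hw] at hw1
    linarith
  obtain ⟨F, hF⟩ := hS.elim_finite_subfamily_closed _
    (fun γ => isClosed_eq (continuous_rhoInf_apply f γ) continuous_const) hempty
  refine ⟨F, fun w _ hwL hwF => not_le.mp fun hw1 => ?_⟩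
  exact hF.subset ⟨⟨hwL, hw1⟩, Set.mem_iInter₂.mpr hwF⟩

/-- Let `Γ` be a countable discrete group and `f ∈ ℤΓ` such that `α_f`
is expansive. Then for all `L > 0`, `ε > 0` there is a finite `F(L,ε) ⊆ Γ` such that any
`w ∈ ℓ∞(Γ)` with `ρ_f w ∈ ℓ∞(Γ,ℤ)`, `‖w‖_∞ ≤ L` and `(ρ_f w)_γ = 0` for all
`γ ∈ F(L,ε)` satisfies `|w_1| < ε`. -/
theorem statement7 {Γ : Type*} [Group Γ] [Countable Γ]
    (f : Γ →₀ ℤ) (hexp : ExpansiveAction f) :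
    ∀ L : ℝ, 0 < L → ∀ ε : ℝ, 0 < ε → ∃ F : Finset Γ, ∀ w : Γ → ℝ,
      IntValued (rhoInf f w) → (∀ γ : Γ, |w γ| ≤ L) →
      (∀ γ ∈ F, rhoInf f w γ = 0) → |w 1| < ε :=
  statement7_general f hexp
end
end

section
/- Let Γ be a countable residually finite, finitely generated group of polynomial growth, with a finite symmetric generating set F containing the identity, and let B_F(n) = {γ₁⋯γ_k : k ≤ n, γ_i ∈ F} (with B_F(0) = {1}). Let f ∈ ℤΓ be such that α_f is expansive, i.e. f is invertible in ℓ¹(Γ) with inverse w_f^Δ = f⁻¹. Then w_f^Δ has exponential decay in the word metric: there exist constants C > 0 and θ ∈ (0,1) such that for every n ≥ 0 and every γ ∈ Γ with γ ∉ B_F(n), |(w_f^Δ)_γ| ≤ C·θⁿ. -/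
open scoped BigOperators symmDiff Pointwise

noncomputable section

section Hilbert

variable {Γ : Type*} [Group Γ]

/-- The von Neumann trace of `log (A A*)`, i.e. `tr_{NΓ}(log (A A*)) = (log(AA*) δ₁)(1)`,
where `log` is given by the continuous functional calculus. -/
instance H2.instCFCReal : ContinuousFunctionalCalculus ℝ (H2 Γ →L[ℂ] H2 Γ) IsSelfAdjoint :=
  IsSelfAdjoint.instContinuousFunctionalCalculus

end Hilbert

/-!
Let `w₀` be the restriction of `w` to a finite set `S` carrying all but a small part of the
`ℓ¹`-mass of `w`. Then `r := f·w₀ - δ₁ = -f·(w - w₀)` is finitely supported with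
`‖r‖₁ ≤ ‖f‖₁ ‖w - w₀‖₁ ≤ 1/2`, and associativity gives `w = w₀ - w·r`. Off `S` this reads
`w_γ = -∑ₜ w_{γt⁻¹} r_t`, where `t` ranges over a finite set contained in some ball `B_F(M)`;
so every `M` further steps away from `S` halve the bound on `|w_γ|`.
-/

section WordBall

variable {Γ : Type*} [Group Γ]

theorem ballF_mono (F : Finset Γ) {m n : ℕ} (h : m ≤ n) : BallF F m ⊆ BallF F n := by
  rintro γ ⟨l, hl, hF, rfl⟩
  exact ⟨l, hl.trans h, hF, rfl⟩

theorem mul_mem_ballF (F : Finset Γ) {m n : ℕ} {x y : Γ} (hx : x ∈ BallF F m)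
    (hy : y ∈ BallF F n) : x * y ∈ BallF F (m + n) := by
  obtain ⟨l₁, hl₁, hF₁, rfl⟩ := hx
  obtain ⟨l₂, hl₂, hF₂, rfl⟩ := hy
  refine ⟨l₁ ++ l₂, by simpa using Nat.add_le_add hl₁ hl₂, ?_, List.prod_append⟩
  simpa only [List.mem_append, or_imp, forall_and] using ⟨hF₁, hF₂⟩

theorem exists_forall_mem_ballF {F : Finset Γ} (hgen : ∀ γ : Γ, ∃ n : ℕ, γ ∈ BallF F n)
    (A : Finset Γ) : ∃ n : ℕ, ∀ a ∈ A, a ∈ BallF F n := by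
  choose radius hradius using hgen
  exact ⟨A.sup radius, fun a ha => ballF_mono F (Finset.le_sup ha) (hradius a)⟩

end WordBall

section Convolution

variable {Γ : Type*} [Group Γ]

theorem conv_apply_eq_tsum (g h : Γ → ℝ) (γ : Γ) :
    conv g h γ = ∑' s, g (γ * s⁻¹) * h s := by
  rw [conv, ← ((Equiv.inv Γ).trans (Equiv.mulLeft γ)).tsum_eq]
  simp

theorem conv_apply_eq_sum_left {g : Γ → ℝ} {A : Finset Γ} (hg : ∀ x ∉ A, g x = 0)
    (h : Γ → ℝ) (γ : Γ) : conv g h γ = ∑ x ∈ A, g x * h (x⁻¹ * γ) :=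
  tsum_eq_sum fun x hx => by rw [hg x hx, zero_mul]

theorem conv_apply_eq_sum_right (g : Γ → ℝ) {h : Γ → ℝ} {S : Finset Γ}
    (hh : ∀ x ∉ S, h x = 0) (γ : Γ) : conv g h γ = ∑ s ∈ S, g (γ * s⁻¹) * h s := by
  rw [conv_apply_eq_tsum]
  exact tsum_eq_sum fun s hs => by rw [hh s hs, mul_zero]

theorem deltaOne_eq_zero {x : Γ} (hx : x ≠ 1) : deltaOne x = 0 := if_neg hx

theorem deltaOne_conv (h : Γ → ℝ) : conv deltaOne h = h := by
  ext γ
  rw [conv_apply_eq_sum_left (A := {1}) fun x hx => deltaOne_eq_zero (by simpa using hx)]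
  simp [deltaOne]

theorem conv_deltaOne (g : Γ → ℝ) : conv g deltaOne = g := by
  ext γ
  rw [conv_apply_eq_sum_right g (S := {1}) fun x hx => deltaOne_eq_zero (by simpa using hx)]
  simp [deltaOne]

theorem conv_eq_zero_of_notMem_mul [DecidableEq Γ] {g h : Γ → ℝ} {A S : Finset Γ}
    (hg : ∀ x ∉ A, g x = 0) (hh : ∀ x ∉ S, h x = 0) {γ : Γ} (hγ : γ ∉ A * S) :
    conv g h γ = 0 := by
  rw [conv_apply_eq_sum_left hg]
  refine Finset.sum_eq_zero fun x hx => ?_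
  rw [hh, mul_zero]
  exact fun hs => hγ (Finset.mem_mul.2 ⟨x, hx, _, hs, mul_inv_cancel_left x γ⟩)

theorem summable_mul_apply_inv_mul {b : Γ → ℝ} {A : Finset Γ} (hb : ∀ x ∉ A, b x = 0)
    (a : Γ → ℝ) (γ : Γ) : Summable fun y => a y * b (y⁻¹ * γ) := by
  classical
  refine summable_of_ne_finset_zero (s := A.image fun x => γ * x⁻¹) fun y hy => ?_
  rw [hb, mul_zero]
  exact fun hA => hy (Finset.mem_image.2 ⟨y⁻¹ * γ, hA, by group⟩)

theorem conv_assoc_of_finite_support {a b c : Γ → ℝ} {A S : Finset Γ}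
    (hb : ∀ x ∉ A, b x = 0) (hc : ∀ x ∉ S, c x = 0) :
    conv a (conv b c) = conv (conv a b) c := by
  ext γ
  calc conv a (conv b c) γ
      = ∑' y, ∑ s ∈ S, a y * b (y⁻¹ * (γ * s⁻¹)) * c s := by
        refine tsum_congr fun y => ?_
        simp only [conv_apply_eq_sum_right b hc, Finset.mul_sum, mul_assoc]
    _ = ∑ s ∈ S, conv a b (γ * s⁻¹) * c s := by
        rw [Summable.tsum_finsetSum fun s _ =>
          (summable_mul_apply_inv_mul hb a (γ * s⁻¹)).mul_right (c s)]
        exact Finset.sum_congr rfl fun s _ => tsum_mul_right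
    _ = conv (conv a b) c γ := (conv_apply_eq_sum_right _ hc γ).symm

theorem conv_add_of_finite_support {g : Γ → ℝ} {A : Finset Γ} (hg : ∀ x ∉ A, g x = 0)
    (h₁ h₂ : Γ → ℝ) : conv g (h₁ + h₂) = conv g h₁ + conv g h₂ := by
  ext γ
  simp only [Pi.add_apply, conv_apply_eq_sum_left hg, mul_add, Finset.sum_add_distrib]

theorem conv_sub_of_finite_support (g : Γ → ℝ) {h₁ h₂ : Γ → ℝ} {S : Finset Γ}
    (hh₁ : ∀ x ∉ S, h₁ x = 0) (hh₂ : ∀ x ∉ S, h₂ x = 0) :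
    conv g (h₁ - h₂) = conv g h₁ - conv g h₂ := by
  have hh : ∀ x ∉ S, (h₁ - h₂) x = 0 := fun x hx => by simp [hh₁ x hx, hh₂ x hx]
  ext γ
  simp only [Pi.sub_apply, conv_apply_eq_sum_right g hh, conv_apply_eq_sum_right g hh₁,
    conv_apply_eq_sum_right g hh₂, mul_sub, Finset.sum_sub_distrib]

theorem sum_abs_conv_le {g h : Γ → ℝ} {A : Finset Γ} (hg : ∀ x ∉ A, g x = 0)
    (hh : Summable fun x => |h x|) (T : Finset Γ) :
    ∑ t ∈ T, |conv g h t| ≤ (∑ x ∈ A, |g x|) * ∑' x, |h x| := by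
  have htranslate : ∀ x : Γ, ∑ t ∈ T, |h (x⁻¹ * t)| ≤ ∑' y, |h y| := by
    intro x
    classical
    rw [← Finset.sum_image (f := fun y => |h y|) fun _ _ _ _ hyz => mul_left_cancel hyz]
    exact hh.sum_le_tsum _ fun _ _ => abs_nonneg _
  calc ∑ t ∈ T, |conv g h t|
      ≤ ∑ t ∈ T, ∑ x ∈ A, |g x| * |h (x⁻¹ * t)| := by
        refine Finset.sum_le_sum fun t _ => ?_
        rw [conv_apply_eq_sum_left hg]
        exact (Finset.abs_sum_le_sum_abs _ _).trans_eq (by simp only [abs_mul])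
    _ = ∑ x ∈ A, |g x| * ∑ t ∈ T, |h (x⁻¹ * t)| := by
        rw [Finset.sum_comm]
        simp only [Finset.mul_sum]
    _ ≤ (∑ x ∈ A, |g x|) * ∑' x, |h x| := by
        rw [Finset.sum_mul]
        exact Finset.sum_le_sum fun x _ =>
          mul_le_mul_of_nonneg_left (htranslate x) (abs_nonneg _)

end Convolution

section Decay

variable {Γ : Type*} [Group Γ]

theorem IsL1Inverse.exists_recursion {g w : Γ → ℝ} {A : Finset Γ} (hg : ∀ x ∉ A, g x = 0)
    (hw : IsL1Inverse g w) {ε : ℝ} (hε : 0 < ε) :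
    ∃ S T : Finset Γ, ∃ r : Γ → ℝ, ∑ t ∈ T, |r t| < ε ∧
      ∀ γ ∉ S, w γ = -∑ t ∈ T, w (γ * t⁻¹) * r t := by
  classical
  obtain ⟨hsum, hgw, hwg⟩ := hw
  set L := ∑ x ∈ A, |g x|
  obtain ⟨S, hS⟩ := ((tendsto_tsum_compl_atTop_zero fun x => |w x|).eventually
    (gt_mem_nhds (div_pos hε (by positivity : 0 < L + 1)))).exists
  set w₀ := (↑S : Set Γ).indicator w
  set v := (↑S : Set Γ)ᶜ.indicator w
  have hv : ∑' x, |v x| < ε / (L + 1) := by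
    simp_rw [v, ← Real.norm_eq_abs, norm_indicator_eq_indicator_norm, ← tsum_subtype]
    exact hS
  have hw₀ : ∀ x ∉ S, w₀ x = 0 := fun x hx => Set.indicator_of_notMem hx w
  set T := A * S ∪ {1}
  set r := conv g w₀ - deltaOne
  have hr : r = -conv g v := by
    have hsplit := conv_add_of_finite_support hg w₀ v
    rw [Set.indicator_self_add_compl, hgw] at hsplit
    rw [show r = conv g w₀ - deltaOne from rfl, hsplit]
    abel
  have hrT : ∀ x ∉ T, r x = 0 := by
    intro x hx
    simp only [T, Finset.mem_union, Finset.mem_singleton, not_or] at hx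
    simp [r, conv_eq_zero_of_notMem_mul hg hw₀ hx.1, deltaOne_eq_zero hx.2]
  have hwr : conv w r = w₀ - w := by
    have hT : ∀ x ∉ T, conv g w₀ x = 0 := fun x hx =>
      conv_eq_zero_of_notMem_mul hg hw₀ fun h => hx (Finset.mem_union_left _ h)
    have hδ : ∀ x ∉ T, deltaOne x = (0 : ℝ) := fun x hx =>
      deltaOne_eq_zero fun h => hx (Finset.mem_union_right _ (by simp [h]))
    rw [conv_sub_of_finite_support w hT hδ, conv_assoc_of_finite_support hg hw₀, hwg,
      deltaOne_conv, conv_deltaOne]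
  refine ⟨S, T, r, ?_, fun γ hγ => ?_⟩
  · calc ∑ t ∈ T, |r t| = ∑ t ∈ T, |conv g v t| := by simp [hr]
      _ ≤ L * ∑' x, |v x| := sum_abs_conv_le hg (hsum.indicator _).abs T
      _ ≤ L * (ε / (L + 1)) := by gcongr
      _ < ε := by
        rw [mul_div_assoc']
        exact (div_lt_iff₀ (by positivity)).2 (by nlinarith)
  · have := congrFun hwr γ
    rw [Pi.sub_apply, hw₀ γ hγ, conv_apply_eq_sum_right w hrT] at this
    linarith

theorem abs_le_mul_pow_of_recursion (F : Finset Γ) {w r : Γ → ℝ} {S T : Finset Γ}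
    {M N : ℕ} {W q : ℝ} (hW : ∀ γ, |w γ| ≤ W) (hr : ∑ t ∈ T, |r t| ≤ q)
    (hT : ∀ t ∈ T, t ∈ BallF F M) (hS : ∀ s ∈ S, s ∈ BallF F N)
    (hrec : ∀ γ ∉ S, w γ = -∑ t ∈ T, w (γ * t⁻¹) * r t) (k : ℕ) :
    ∀ γ, γ ∉ BallF F (k * M + N) → |w γ| ≤ W * q ^ k := by
  have hW0 : 0 ≤ W := (abs_nonneg _).trans (hW 1)
  have hq0 : 0 ≤ q := (Finset.sum_nonneg fun _ _ => abs_nonneg _).trans hr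
  induction k with
  | zero => exact fun γ _ => by simpa using hW γ
  | succ k ih =>
    intro γ hγ
    have hγS : γ ∉ S := fun h => hγ (ballF_mono F (Nat.le_add_left _ _) (hS γ h))
    have hshift : ∀ t ∈ T, |w (γ * t⁻¹)| ≤ W * q ^ k := fun t ht => ih _ fun hmem => hγ <| by
      simpa [add_mul, add_right_comm] using mul_mem_ballF F hmem (hT t ht)
    calc |w γ| = |∑ t ∈ T, w (γ * t⁻¹) * r t| := by rw [hrec γ hγS, abs_neg]
      _ ≤ ∑ t ∈ T, W * q ^ k * |r t| := by
        refine (Finset.abs_sum_le_sum_abs _ _).trans (Finset.sum_le_sum fun t ht => ?_)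
        rw [abs_mul]
        exact mul_le_mul_of_nonneg_right (hshift t ht) (abs_nonneg _)
      _ ≤ W * q ^ k * q := by
        rw [← Finset.mul_sum]
        exact mul_le_mul_of_nonneg_left hr (by positivity)
      _ = W * q ^ (k + 1) := by ring

theorem abs_le_mul_pow_div_of_recursion (F : Finset Γ) {w r : Γ → ℝ} {S T : Finset Γ}
    {M N : ℕ} {W q : ℝ} (hW : ∀ γ, |w γ| ≤ W) (hr : ∑ t ∈ T, |r t| ≤ q)
    (hT : ∀ t ∈ T, t ∈ BallF F M) (hS : ∀ s ∈ S, s ∈ BallF F N)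
    (hrec : ∀ γ ∉ S, w γ = -∑ t ∈ T, w (γ * t⁻¹) * r t) (n : ℕ) (γ : Γ)
    (hγ : γ ∉ BallF F n) : |w γ| ≤ W * q ^ ((n - N) / M) := by
  by_cases hn : N ≤ n
  · refine abs_le_mul_pow_of_recursion F hW hr hT hS hrec _ γ fun hmem => hγ ?_
    exact ballF_mono F (by have := Nat.div_mul_le_self (n - N) M; omega) hmem
  · simpa [Nat.sub_eq_zero_of_le (not_le.1 hn).le] using hW γ

end Decay

theorem exists_mul_pow_div_le_mul_pow {q : ℝ} (hq0 : 0 < q) (hq1 : q < 1) {M : ℕ} (hM : 0 < M)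
    (N : ℕ) (W : ℝ) : ∃ C : ℝ, 0 < C ∧ ∃ θ : ℝ, θ ∈ Set.Ioo (0 : ℝ) 1 ∧
      ∀ n : ℕ, W * q ^ ((n - N) / M) ≤ C * θ ^ n := by
  set θ := q ^ (M : ℝ)⁻¹
  have hθ0 : 0 < θ := Real.rpow_pos_of_pos hq0 _
  have hθ1 : θ < 1 := Real.rpow_lt_one hq0.le hq1 (by positivity)
  have hθM : θ ^ M = q := by
    rw [← Real.rpow_natCast, ← Real.rpow_mul hq0.le, inv_mul_cancel₀ (by positivity),
      Real.rpow_one]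
  refine ⟨(|W| + 1) / θ ^ (N + M), by positivity, θ, ⟨hθ0, hθ1⟩, fun n => ?_⟩
  have hk : n ≤ M * ((n - N) / M) + (N + M) := by
    have := Nat.lt_mul_div_succ (n - N) hM
    rw [Nat.mul_succ] at this
    omega
  set k := (n - N) / M
  calc W * q ^ k ≤ (|W| + 1) * θ ^ (M * k) := by
        rw [pow_mul, hθM]
        exact mul_le_mul_of_nonneg_right (by linarith [le_abs_self W]) (by positivity)
    _ = (|W| + 1) / θ ^ (N + M) * θ ^ (M * k + (N + M)) := by
        rw [pow_add]
        field_simp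
        ring
    _ ≤ (|W| + 1) / θ ^ (N + M) * θ ^ n :=
        mul_le_mul_of_nonneg_left (pow_le_pow_of_le_one hθ0.le hθ1.le hk) (by positivity)

theorem statement8_general {Γ : Type*} [Group Γ] (F : Finset Γ)
    (hgen : ∀ γ : Γ, ∃ n : ℕ, γ ∈ BallF F n)
    (f : Γ →₀ ℤ) (w : Γ → ℝ) (hw : IsL1Inverse (fR f) w) :
    ∃ C : ℝ, 0 < C ∧ ∃ θ : ℝ, θ ∈ Set.Ioo (0 : ℝ) 1 ∧
      ∀ n : ℕ, ∀ γ : Γ, γ ∉ BallF F n → |w γ| ≤ C * θ ^ n := by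
  have hf : ∀ x ∉ f.support, fR f x = 0 := fun x hx => by
    simp [fR, Finsupp.notMem_support_iff.1 hx]
  obtain ⟨S, T, r, hr, hrec⟩ := hw.exists_recursion hf (by norm_num : (0 : ℝ) < 1 / 2)
  obtain ⟨N, hS⟩ := exists_forall_mem_ballF hgen S
  obtain ⟨M, hT⟩ := exists_forall_mem_ballF hgen T
  have hT' : ∀ t ∈ T, t ∈ BallF F (M + 1) := fun t ht => ballF_mono F M.le_succ (hT t ht)
  have hW : ∀ γ, |w γ| ≤ ∑' x, |w x| := fun γ =>
    hw.1.abs.le_tsum γ fun _ _ => abs_nonneg _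
  obtain ⟨C, hC, θ, hθ, hbound⟩ := exists_mul_pow_div_le_mul_pow (by norm_num : (0 : ℝ) < 1 / 2)
    (by norm_num) M.succ_pos N (∑' x, |w x|)
  exact ⟨C, hC, θ, hθ, fun n γ hγ =>
    (abs_le_mul_pow_div_of_recursion F hW hr.le hT' hS hrec n γ hγ).trans (hbound n)⟩

/-- Let `Γ` be a countable residually finite, finitely generated group
of polynomial growth with respect to a finite symmetric generating set `F ∋ 1`, and let
`f ∈ ℤΓ` be such that `α_f` is expansive, i.e. `f` is invertible in `ℓ¹(Γ)` with inverse
`w = w_f^Δ`. Then `w` decays exponentially in the word metric: there are `C > 0` and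
`θ ∈ (0,1)` with `|w_γ| ≤ C θⁿ` whenever `γ ∉ B_F(n)`. -/
theorem statement8 {Γ : Type*} [Group Γ] [Countable Γ] (hRF : ResFinite Γ)
    (F : Finset Γ) (hF1 : (1 : Γ) ∈ F) (hFsymm : ∀ γ ∈ F, γ⁻¹ ∈ F)
    (hgen : ∀ γ : Γ, ∃ n : ℕ, γ ∈ BallF F n)
    (hgrowth : ∃ c d : ℝ, 1 ≤ c ∧ 1 ≤ d ∧ ∀ n : ℕ, 1 ≤ n →
      (BallF F n).Finite ∧ (Nat.card (BallF F n) : ℝ) ≤ c * (n : ℝ) ^ d)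
    (f : Γ →₀ ℤ) (w : Γ → ℝ) (hw : IsL1Inverse (fR f) w) :
    ∃ C : ℝ, 0 < C ∧ ∃ θ : ℝ, θ ∈ Set.Ioo (0 : ℝ) 1 ∧
      ∀ n : ℕ, ∀ γ : Γ, γ ∉ BallF F n → |w γ| ≤ C * θ ^ n :=
  statement8_general F hgen f w hw

end
end

section
/- Let Γ be a countable residually finite discrete group, f ∈ ℤΓ invertible in ℓ¹(Γ), and Γ' ≤ Γ a subgroup of finite index. Then ρ_f restricts to an endomorphism of the finite-dimensional real vector space ℓ∞(Γ)^{Γ'} of left Γ'-invariant functions (which is isomorphic to ℝ^{Γ'\Γ}), Fix_{Γ'}(X_f) is finite, and its cardinality equals the absolute value of the determinant of this restriction: |Fix_{Γ'}(X_f)| = |det(ρ_f |_{ℓ∞(Γ)^{Γ'}})|. -/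
open scoped BigOperators symmDiff Pointwise

noncomputable section

section Hilbert

variable {Γ : Type*} [Group Γ]

instance instCFCRealH2 : ContinuousFunctionalCalculus ℝ (H2 Γ →L[ℂ] H2 Γ) IsSelfAdjoint :=
  IsSelfAdjoint.instContinuousFunctionalCalculus

end Hilbert


lemma lshR_add' {Γ : Type*} [Group Γ] (γ : Γ) (a b : Γ → ℝ) :
    lshR γ (a + b) = lshR γ a + lshR γ b := rfl

lemma lshR_smul' {Γ : Type*} [Group Γ] (γ : Γ) (c : ℝ) (a : Γ → ℝ) :
    lshR γ (c • a) = c • lshR γ a := rfl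

/-- The space `ℓ∞(Γ)^{Γ'}` of left `Γ'`-invariant real functions on `Γ`, as a submodule
of `Γ → ℝ` (for finite-index `Γ'` these are automatically bounded). -/
def invSubmodule {Γ : Type*} [Group Γ] (Γ' : Subgroup Γ) : Submodule ℝ (Γ → ℝ) where
  carrier := {w | ∀ γ ∈ Γ', lshR γ w = w}
  add_mem' := by
    intro a b ha hb γ hγ
    rw [lshR_add', ha γ hγ, hb γ hγ]
  zero_mem' := by
    intro γ hγ
    rfl
  smul_mem' := by
    intro c a ha γ hγ
    rw [lshR_smul', ha γ hγ]

/-- `ρ_f`, for `f ∈ ℤΓ`, as a linear endomorphism of the space of all real functions. -/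
def rhoInfLin {Γ : Type*} [Group Γ] (f : Γ →₀ ℤ) : (Γ → ℝ) →ₗ[ℝ] (Γ → ℝ) where
  toFun := rhoInf f
  map_add' a b := by
    funext γ
    simp only [rhoInf, Finsupp.sum, Pi.add_apply, mul_add, Finset.sum_add_distrib]
  map_smul' c a := by
    funext γ
    simp only [rhoInf, Finsupp.sum, Pi.smul_apply, smul_eq_mul, RingHom.id_apply,
      Finset.mul_sum]
    exact Finset.sum_congr rfl fun x _ => by ring


/-!
Since `Γ'` has finite index, a left `Γ'`-invariant function on `Γ` with values in an abelian
group `A` is the same as a function on the finite set `Γ'\Γ` of right cosets, and there `ρ_f`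
acts by one integer matrix `M`, whatever `A` is. For `A = ℝ` this identifies the determinant of
the restriction of `ρ_f` with `det M`, which is nonzero because the `ℓ¹`-inverse of `f` gives a
left inverse of `ρ_f` on bounded functions. For `A = 𝕋` it identifies `Fix_{Γ'}(X_f)` with the
kernel of `M` on `𝕋^{Γ'\Γ}`, and that kernel is `M⁻¹ℤⁿ/ℤⁿ ≅ ℤⁿ/Mℤⁿ`, of order `|det M|`.
-/

open Finset

section RightCosets

variable {Γ : Type*} [Group Γ] (Γ' : Subgroup Γ)

abbrev RightCosets : Type _ := Quotient (QuotientGroup.rightRel Γ')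

namespace RightCosets

def mk (γ : Γ) : RightCosets Γ' := Quotient.mk'' γ

variable {Γ'}

theorem mk_eq_mk {a b : Γ} : mk Γ' a = mk Γ' b ↔ b * a⁻¹ ∈ Γ' :=
  Quotient.eq''.trans QuotientGroup.rightRel_apply

theorem mk_inv_mul {γ : Γ} (hγ : γ ∈ Γ') (x : Γ) : mk Γ' (γ⁻¹ * x) = mk Γ' x :=
  mk_eq_mk.mpr (by simpa using hγ)

def mulRight (q : RightCosets Γ') (γ : Γ) : RightCosets Γ' :=
  Quotient.map' (· * γ) (fun a b h => by
    rw [QuotientGroup.rightRel_apply] at h ⊢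
    simpa [mul_assoc] using h) q

def lift {A : Type*} (w : Γ → A) (hw : ∀ γ ∈ Γ', (fun x => w (γ⁻¹ * x)) = w) :
    RightCosets Γ' → A :=
  Quotient.lift w fun a b h => by
    simpa [mul_assoc] using congrFun (hw _ (QuotientGroup.rightRel_apply.mp h)) b

theorem comp_mk_invariant {A : Type*} (u : RightCosets Γ' → A) :
    ∀ γ ∈ Γ', (fun x => u (mk Γ' (γ⁻¹ * x))) = fun x => u (mk Γ' x) :=
  fun _ hγ => funext fun x => by rw [mk_inv_mul hγ]

instance [Γ'.FiniteIndex] : Finite (RightCosets Γ') :=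
  Finite.of_equiv _ (QuotientGroup.quotientRightRelEquivQuotientLeftRel Γ').symm

end RightCosets

end RightCosets

section CosetMatrix

variable {Γ : Type*} [Group Γ] (Γ' : Subgroup Γ)

open Classical in
def cosetMatrix (f : Γ →₀ ℤ) : Matrix (RightCosets Γ') (RightCosets Γ') ℤ :=
  fun q q' => ∑ γ ∈ f.support with q.mulRight γ = q', f γ

variable {Γ'} [Fintype (RightCosets Γ')]

theorem sum_zsmul_mulRight_eq_sum_cosetMatrix {A : Type*} [AddCommGroup A] (f : Γ →₀ ℤ)
    (u : RightCosets Γ' → A) (q : RightCosets Γ') :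
    (f.sum fun γ n => n • u (q.mulRight γ)) = ∑ q', cosetMatrix Γ' f q q' • u q' := by
  classical
  rw [Finsupp.sum, ← sum_fiberwise_of_maps_to (g := q.mulRight) (t := univ)
    (fun _ _ => mem_univ _)]
  refine sum_congr rfl fun q' _ => ?_
  rw [cosetMatrix, sum_smul]
  exact sum_congr rfl fun γ hγ => by rw [(mem_filter.mp hγ).2]

theorem rhoT_comp_mk (f : Γ →₀ ℤ) (u : RightCosets Γ' → Torus) (γ : Γ) :
    rhoT f (u ∘ RightCosets.mk Γ') γ =
      ∑ q, cosetMatrix Γ' f (RightCosets.mk Γ' γ) q • u q :=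
  sum_zsmul_mulRight_eq_sum_cosetMatrix f u (RightCosets.mk Γ' γ)

theorem rhoInf_comp_mk (f : Γ →₀ ℤ) (u : RightCosets Γ' → ℝ) (γ : Γ) :
    rhoInf f (u ∘ RightCosets.mk Γ') γ =
      ∑ q, (cosetMatrix Γ' f (RightCosets.mk Γ' γ) q : ℝ) * u q := by
  simp only [rhoInf, ← zsmul_eq_mul]
  exact sum_zsmul_mulRight_eq_sum_cosetMatrix f u (RightCosets.mk Γ' γ)

end CosetMatrix

section InvariantFunctions

variable {Γ : Type*} [Group Γ] {Γ' : Subgroup Γ}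

open RightCosets

theorem rhoInfLin_mem_invSubmodule (f : Γ →₀ ℤ) :
    ∀ v ∈ invSubmodule Γ', rhoInfLin f v ∈ invSubmodule Γ' := by
  intro v hv γ hγ
  funext x
  change rhoInf f v (γ⁻¹ * x) = rhoInf f v x
  refine Finsupp.sum_congr fun c _ => ?_
  rw [mul_assoc]
  exact congrArg _ (congrFun (hv γ hγ) (x * c))

variable (Γ') in
def invSubmoduleEquiv : invSubmodule Γ' ≃ₗ[ℝ] (RightCosets Γ' → ℝ) where
  toFun w := lift w.1 w.2
  invFun u := ⟨u ∘ mk Γ', comp_mk_invariant u⟩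
  map_add' _ _ := funext fun q => Quotient.inductionOn q fun _ => rfl
  map_smul' _ _ := funext fun q => Quotient.inductionOn q fun _ => rfl
  left_inv _ := rfl
  right_inv _ := funext fun q => Quotient.inductionOn q fun _ => rfl

theorem bdd_of_mem_invSubmodule [Γ'.FiniteIndex] {w : Γ → ℝ} (hw : w ∈ invSubmodule Γ') :
    Bdd w := by
  obtain ⟨C, hC⟩ := (Set.finite_range fun q => |invSubmoduleEquiv Γ' ⟨w, hw⟩ q|).bddAbove
  exact ⟨C, fun γ => hC ⟨mk Γ' γ, rfl⟩⟩

variable [Fintype (RightCosets Γ')]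

def fixSetEquiv (f : Γ →₀ ℤ) :
    FixSet f Γ' ≃
      {u : RightCosets Γ' → Torus // ∀ q, ∑ q', cosetMatrix Γ' f q q' • u q' = 0} where
  toFun x := ⟨lift x.1 x.2.2, fun q => Quotient.inductionOn q fun γ =>
    (rhoT_comp_mk f (lift x.1 x.2.2) γ).symm.trans (congrFun x.2.1 γ)⟩
  invFun u := ⟨u.1 ∘ mk Γ', funext fun γ => (rhoT_comp_mk f u.1 γ).trans (u.2 _),
    comp_mk_invariant u.1⟩
  left_inv _ := rfl
  right_inv _ := Subtype.ext <| funext fun q => Quotient.inductionOn q fun _ => rfl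

theorem det_restrict_rhoInfLin [DecidableEq (RightCosets Γ')] (f : Γ →₀ ℤ)
    (h : ∀ v ∈ invSubmodule Γ', rhoInfLin f v ∈ invSubmodule Γ') :
    LinearMap.det ((rhoInfLin f).restrict h) = ((cosetMatrix Γ' f).det : ℝ) := by
  have hconj : (invSubmoduleEquiv Γ').toLinearMap ∘ₗ (rhoInfLin f).restrict h ∘ₗ
      (invSubmoduleEquiv Γ').symm.toLinearMap =
        Matrix.toLin' ((cosetMatrix Γ' f).map fun n => (n : ℝ)) :=
    LinearMap.ext fun u => funext fun q => Quotient.inductionOn q fun γ =>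
      rhoInf_comp_mk f u γ
  rw [← LinearMap.det_conj _ (invSubmoduleEquiv Γ'), hconj, LinearMap.det_toLin',
    Int.cast_det]

end InvariantFunctions

theorem summable_mul_of_bdd {ι : Type*} {w : ι → ℝ} (hw : Bdd w) {h : ι → ℝ}
    (hh : Summable h) (F : ι → ι) : Summable fun x => w (F x) * h x := by
  obtain ⟨C, hC⟩ := hw
  refine hh.abs.mul_left C |>.of_norm_bounded fun x => ?_
  rw [Real.norm_eq_abs, abs_mul]
  exact mul_le_mul_of_nonneg_right (hC _) (abs_nonneg _)

section L1Inverse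

variable {Γ : Type*} [Group Γ]

theorem conv_fR_apply (g : Γ → ℝ) (f : Γ →₀ ℤ) (x : Γ) :
    conv g (fR f) x = ∑ c ∈ f.support, (f c : ℝ) * g (x * c⁻¹) := by
  rw [conv, ← ((Equiv.inv Γ).trans (Equiv.mulLeft x)).tsum_eq]
  refine (tsum_eq_sum fun c hc => ?_).trans (sum_congr rfl fun c _ => ?_)
  · simp [fR, Finsupp.notMem_support_iff.mp hc]
  · simp [fR, mul_assoc, mul_comm]

theorem rhoL1_rhoInf {f : Γ →₀ ℤ} {g : Γ → ℝ} (hg : Summable g)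
    (hgf : conv g (fR f) = deltaOne) {w : Γ → ℝ} (hw : Bdd w) :
    rhoL1 g (rhoInf f w) = w := by
  have hsum : ∀ c : Γ, ∀ F : Γ → Γ, Summable fun x => w (F x) * g (x * c) := fun c =>
    summable_mul_of_bdd hw ((Equiv.mulRight c).summable_iff.mpr hg)
  funext γ
  calc rhoL1 g (rhoInf f w) γ
      = ∑' x, ∑ c ∈ f.support, (f c : ℝ) * (w (γ * x * c) * g x) := by
        simp only [rhoL1, rhoInf, Finsupp.sum, sum_mul, mul_assoc]
    _ = ∑ c ∈ f.support, ∑' x, (f c : ℝ) * (w (γ * x * c) * g x) :=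
        Summable.tsum_finsetSum fun c _ => by
          simpa using (hsum 1 (γ * · * c)).mul_left (f c : ℝ)
    _ = ∑ c ∈ f.support, ∑' y, (f c : ℝ) * (w (γ * y) * g (y * c⁻¹)) :=
        sum_congr rfl fun c _ => by
          rw [← (Equiv.mulRight c⁻¹).tsum_eq]
          simp [mul_assoc]
    _ = ∑' y, ∑ c ∈ f.support, (f c : ℝ) * (w (γ * y) * g (y * c⁻¹)) :=
        (Summable.tsum_finsetSum fun c _ => (hsum c⁻¹ (γ * ·)).mul_left (f c : ℝ)).symm
    _ = ∑' y, w (γ * y) * conv g (fR f) y :=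
        tsum_congr fun y => by
          rw [conv_fR_apply, mul_sum]
          exact sum_congr rfl fun c _ => mul_left_comm _ _ _
    _ = w γ := by
        rw [hgf, tsum_eq_single 1 fun y hy => by simp [deltaOne, hy]]
        simp [deltaOne]

theorem eq_zero_of_rhoInf_eq_zero_s10 {f : Γ →₀ ℤ} {g : Γ → ℝ} (hg : IsL1Inverse (fR f) g)
    {w : Γ → ℝ} (hw : Bdd w) (h0 : rhoInf f w = 0) : w = 0 := by
  rw [← rhoL1_rhoInf hg.1 hg.2.2 hw, h0]
  funext γ
  simp [rhoL1]

end L1Inverse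

section TorusKernel

open Matrix

variable {ι : Type*} [Fintype ι] [DecidableEq ι]

omit [Fintype ι] [DecidableEq ι] in
theorem Torus.coe_comp_eq_zero_iff {v : ι → ℝ} :
    (fun i => (v i : Torus)) = 0 ↔ ∃ m : ι → ℤ, (fun i => (m i : ℝ)) = v := by
  simp only [funext_iff, Pi.zero_apply, AddCircle.coe_eq_zero_iff, zsmul_eq_mul, mul_one]
  exact Classical.skolem

omit [DecidableEq ι] in
theorem Torus.sum_zsmul_coe (M : Matrix ι ι ℤ) (v : ι → ℝ) (i : ι) :
    ∑ j, M i j • (v j : Torus) = ((M.map ((↑) : ℤ → ℝ) *ᵥ v) i : Torus) := by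
  simp only [Matrix.mulVec, dotProduct, Matrix.map_apply, ← zsmul_eq_mul]
  change _ = QuotientAddGroup.mk' _ _
  simp only [map_sum, map_zsmul]
  rfl

omit [DecidableEq ι] in
theorem Matrix.map_intCast_mulVec (M : Matrix ι ι ℤ) (m : ι → ℤ) :
    M.map ((↑) : ℤ → ℝ) *ᵥ (fun j => (m j : ℝ)) = fun i => ((M *ᵥ m) i : ℝ) :=
  funext fun i => (RingHom.map_mulVec (Int.castRingHom ℝ) M m i).symm

def torusKerParam (M : Matrix ι ι ℤ) : (ι → ℤ) →ₗ[ℤ] (ι → Torus) :=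
  AddMonoidHom.toIntLinearMap <| AddMonoidHom.mk'
    (fun k i => (((M.map ((↑) : ℤ → ℝ))⁻¹ *ᵥ fun j => (k j : ℝ)) i : Torus))
    fun a b => funext fun i => by
      simp only [Pi.add_apply, Int.cast_add, ← AddCircle.coe_add]
      rw [← Pi.add_apply (f := (M.map ((↑) : ℤ → ℝ))⁻¹ *ᵥ _), ← mulVec_add]
      rfl

theorem torusKerParam_apply (M : Matrix ι ι ℤ) (k : ι → ℤ) :
    torusKerParam M k =
      fun i => (((M.map ((↑) : ℤ → ℝ))⁻¹ *ᵥ fun j => (k j : ℝ)) i : Torus) :=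
  rfl

variable {M : Matrix ι ι ℤ} (hM : M.det ≠ 0)
include hM

theorem Matrix.isUnit_det_map_intCast : IsUnit (M.map ((↑) : ℤ → ℝ)).det := by
  rw [← Int.cast_det]
  exact isUnit_iff_ne_zero.mpr (Int.cast_ne_zero.mpr hM)

theorem range_torusKerParam :
    (LinearMap.range (torusKerParam M) : Set (ι → Torus)) =
      {u | ∀ i, ∑ j, M i j • u j = 0} := by
  have hA := Matrix.isUnit_det_map_intCast hM
  ext u
  simp only [SetLike.mem_coe, LinearMap.mem_range, Set.mem_ofPred_eq]
  constructor
  · rintro ⟨k, rfl⟩ i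
    rw [torusKerParam_apply, Torus.sum_zsmul_coe, mulVec_mulVec, mul_nonsing_inv _ hA, one_mulVec]
    exact (AddCircle.coe_eq_zero_iff _).mpr ⟨k i, by simp⟩
  · intro hu
    choose v hv using fun i => QuotientAddGroup.mk_surjective (u i)
    obtain rfl : (fun i => (v i : Torus)) = u := funext hv
    simp only [Torus.sum_zsmul_coe] at hu
    obtain ⟨m, hm⟩ := Torus.coe_comp_eq_zero_iff.mp (funext hu)
    refine ⟨m, ?_⟩
    rw [torusKerParam_apply, hm, mulVec_mulVec, nonsing_inv_mul _ hA, one_mulVec]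

theorem ker_torusKerParam :
    LinearMap.ker (torusKerParam M) = LinearMap.range (Matrix.toLin' M) := by
  have hA := Matrix.isUnit_det_map_intCast hM
  ext k
  rw [LinearMap.mem_ker, LinearMap.mem_range, torusKerParam_apply, Torus.coe_comp_eq_zero_iff]
  refine exists_congr fun m => ?_
  rw [Matrix.toLin'_apply]
  constructor
  · intro h
    have h' := congrArg (M.map ((↑) : ℤ → ℝ) *ᵥ ·) h
    simp only [Matrix.map_intCast_mulVec, mulVec_mulVec, mul_nonsing_inv _ hA, one_mulVec] at h'
    exact funext fun i => by exact_mod_cast congrFun h' i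
  · rintro rfl
    rw [← Matrix.map_intCast_mulVec, mulVec_mulVec, nonsing_inv_mul _ hA, one_mulVec]

theorem card_torusKer_eq_natAbs_det :
    Nat.card {u : ι → Torus // ∀ i, ∑ j, M i j • u j = 0} = M.det.natAbs := by
  let e : (ι → ℤ) ≃ₗ[ℤ] LinearMap.range (Matrix.toLin' M) :=
    LinearEquiv.ofInjective _ (Matrix.mulVec_injective_of_det_ne_zero hM)
  calc Nat.card {u : ι → Torus // ∀ i, ∑ j, M i j • u j = 0}
      = Nat.card (LinearMap.range (torusKerParam M)) :=
        Nat.card_congr (Equiv.setCongr (range_torusKerParam hM)).symm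
    _ = Nat.card ((ι → ℤ) ⧸ LinearMap.ker (torusKerParam M)) :=
        Nat.card_congr (torusKerParam M).quotKerEquivRange.toEquiv.symm
    _ = (LinearMap.det (Matrix.toLin' M)).natAbs := by
        rw [ker_torusKerParam hM, ← Submodule.natAbs_det_equiv _ e]
        rfl
    _ = M.det.natAbs := by rw [LinearMap.det_toLin']

end TorusKernel

theorem det_restrict_rhoInfLin_ne_zero {Γ : Type*} [Group Γ] {Γ' : Subgroup Γ} [Γ'.FiniteIndex]
    {f : Γ →₀ ℤ} {g : Γ → ℝ} (hg : IsL1Inverse (fR f) g)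
    (h : ∀ v ∈ invSubmodule Γ', rhoInfLin f v ∈ invSubmodule Γ') :
    LinearMap.det ((rhoInfLin f).restrict h) ≠ 0 := by
  have := (invSubmoduleEquiv Γ').symm.finiteDimensional
  refine LinearMap.det_eq_zero_iff_ker_ne_bot.not_left.mpr <|
    LinearMap.ker_eq_bot'.mpr fun w hw => ?_
  exact Subtype.ext <| eq_zero_of_rhoInf_eq_zero_s10 hg (bdd_of_mem_invSubmodule w.2)
    (congrArg Subtype.val hw)

theorem statement10_general {Γ : Type*} [Group Γ]
    (f : Γ →₀ ℤ) (hf : ∃ g : Γ → ℝ, IsL1Inverse (fR f) g)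
    (Γ' : Subgroup Γ) (hΓ' : Γ'.FiniteIndex) :
    ∃ h : ∀ v ∈ invSubmodule Γ', rhoInfLin f v ∈ invSubmodule Γ',
      FiniteDimensional ℝ (invSubmodule Γ') ∧ (FixSet f Γ').Finite ∧
      (Nat.card (FixSet f Γ') : ℝ) = |LinearMap.det ((rhoInfLin f).restrict h)| := by
  classical
  obtain ⟨g, hg⟩ := hf
  let _ : Fintype (RightCosets Γ') := Fintype.ofFinite _
  have hmem := rhoInfLin_mem_invSubmodule (Γ' := Γ') f
  have hdet := det_restrict_rhoInfLin f hmem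
  have hM : (cosetMatrix Γ' f).det ≠ 0 := by
    exact_mod_cast hdet ▸ det_restrict_rhoInfLin_ne_zero hg hmem
  have hcard : Nat.card (FixSet f Γ') = (cosetMatrix Γ' f).det.natAbs :=
    (Nat.card_congr (fixSetEquiv f)).trans (card_torusKer_eq_natAbs_det hM)
  refine ⟨hmem, (invSubmoduleEquiv Γ').symm.finiteDimensional, ?_, ?_⟩
  · refine Set.finite_coe_iff.mp (Nat.finite_of_card_ne_zero ?_)
    rw [hcard]
    exact Int.natAbs_ne_zero.mpr hM
  · rw [hcard, hdet, Nat.cast_natAbs, Int.cast_abs]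

/-- Let `Γ` be a countable residually finite discrete group, `f ∈ ℤΓ`
invertible in `ℓ¹(Γ)`, and `Γ' ≤ Γ` of finite index. Then `ρ_f` restricts to an
endomorphism of the finite-dimensional space `ℓ∞(Γ)^{Γ'}` of left `Γ'`-invariant
functions, `Fix_{Γ'}(X_f)` is finite, and
`|Fix_{Γ'}(X_f)| = |det(ρ_f |_{ℓ∞(Γ)^{Γ'}})|`. -/
theorem statement10 {Γ : Type*} [Group Γ] [Countable Γ] (hRF : ResFinite Γ)
    (f : Γ →₀ ℤ) (hf : ∃ g : Γ → ℝ, IsL1Inverse (fR f) g)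
    (Γ' : Subgroup Γ) (hΓ' : Γ'.FiniteIndex) :
    ∃ h : ∀ v ∈ invSubmodule Γ', rhoInfLin f v ∈ invSubmodule Γ',
      FiniteDimensional ℝ (invSubmodule Γ') ∧ (FixSet f Γ').Finite ∧
      (Nat.card (FixSet f Γ') : ℝ) = |LinearMap.det ((rhoInfLin f).restrict h)| :=
  statement10_general f hf Γ' hΓ'

end
end
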